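/- arXiv:1504.02852 — 5 statements merged into one kernel-verified Lean document; each statement's English description precedes it below -/
import Mathlib

section
/- Under Assumptions 1, 2 and 3(b), the second-order Taylor remainder of the gradient of G_h at Γ_m is uniformly quadratically bounded: for all h ∈ ℝ^d and all V ∈ S(H), ‖∇G_h(V) − ∇G_h(Γ_m) − ∇²G_h(Γ_m)(V − Γ_m)‖_F ≤ 6C ‖V − Γ_m‖_F². -/
/-!
With `normalize u = ‖u‖⁻¹ • u`, the gradient is `∇G_h(V) = -E[normalize (Y(h) - V)]` and the Hessian
`∇²G_h(Γ)` is the expectation of the derivative of `normalize` at `Y(h) - Γ`, so the remainder is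
the expectation of the second-order Taylor remainder of `normalize`. For `a ≠ 0` and `b = a - w`,
that remainder equals `‖a‖⁻¹ ((‖b‖ - ‖a‖ + ⟪â, w⟫) b̂ + ⟪â, w⟫ (â - b̂))`; the scalar is the Taylor
remainder of the norm, of size `2‖w‖²/‖a‖`, and `‖â - b̂‖ ≤ 2‖w‖/‖a‖`, so pointwise the remainder is
at most `4‖w‖²/‖a‖²`. Assumption 3(b) at `V = Γ` bounds `E[‖Y(h) - Γ‖⁻²]` by `C`, and it also forces
`Y(h) ≠ Γ` almost surely.
-/

open MeasureTheory ProbabilityTheory Filter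
open scoped ENNReal NNReal RealInnerProductSpace BigOperators

noncomputable section

/-- The space `S(H)` of `d × d` real matrices, viewed as a Euclidean space, so that its
norm is the Frobenius norm and its inner product `⟪A, B⟫ = ∑ i j, A i j * B i j = tr (Aᵀ B)`
is the Frobenius inner product. -/
abbrev Mat (d : ℕ) := EuclideanSpace ℝ (Fin d × Fin d)

/-- `Y(h) = (x − h)(x − h)ᵀ`. -/
def Ymat {d : ℕ} (x h : EuclideanSpace ℝ (Fin d)) : Mat d :=
  (WithLp.equiv 2 _).symm (fun p => (x p.1 - h p.1) * (x p.2 - h p.2))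

variable {d : ℕ} {Ω : Type*} [MeasurableSpace Ω]

/-- `G_h(V) = E[‖Y(h) − V‖_F − ‖Y(h)‖_F]`. -/
def Gfun (P : Measure Ω) (X : Ω → EuclideanSpace ℝ (Fin d))
    (h : EuclideanSpace ℝ (Fin d)) (V : Mat d) : ℝ :=
  ∫ ω, (‖Ymat (X ω) h - V‖ - ‖Ymat (X ω) h‖) ∂P

/-- The gradient `∇G_h(V) = −E[(Y(h) − V)/‖Y(h) − V‖_F]`. -/
def gradG (P : Measure Ω) (X : Ω → EuclideanSpace ℝ (Fin d))
    (h : EuclideanSpace ℝ (Fin d)) (V : Mat d) : Mat d :=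
  - ∫ ω, ‖Ymat (X ω) h - V‖⁻¹ • (Ymat (X ω) h - V) ∂P

/-- The Hessian operator
`∇²G_h(V)(A) = E[(1/‖Y(h) − V‖_F)(A − ⟪Y(h) − V, A⟫_F (Y(h) − V)/‖Y(h) − V‖_F²)]`. -/
def hessG (P : Measure Ω) (X : Ω → EuclideanSpace ℝ (Fin d))
    (h : EuclideanSpace ℝ (Fin d)) (V : Mat d) (A : Mat d) : Mat d :=
  ∫ ω, ‖Ymat (X ω) h - V‖⁻¹ •
    (A - (‖Ymat (X ω) h - V‖ ^ 2)⁻¹ • (⟪Ymat (X ω) h - V, A⟫ • (Ymat (X ω) h - V))) ∂P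

open NormedSpace (normalize)

section Normalize

variable {E : Type*} [NormedAddCommGroup E] [NormedSpace ℝ E]

lemma norm_normalize_le_one (x : E) : ‖normalize x‖ ≤ 1 := by
  rcases eq_or_ne x 0 with rfl | hx
  · simp
  · exact (NormedSpace.norm_normalize hx).le

lemma norm_normalize_sub_normalize_sub_le {a : E} (ha : a ≠ 0) (w : E) :
    ‖normalize a - normalize (a - w)‖ ≤ 2 * ‖w‖ / ‖a‖ := by
  have hid : normalize a - normalize (a - w) =
      ‖a‖⁻¹ • (w + (‖a - w‖ - ‖a‖) • normalize (a - w)) := by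
    rw [sub_smul, NormedSpace.norm_smul_normalize, smul_add, smul_sub, smul_smul,
      inv_mul_cancel₀ (norm_ne_zero_iff.mpr ha), one_smul, NormedSpace.normalize, smul_sub]
    abel
  calc ‖normalize a - normalize (a - w)‖
      = ‖a‖⁻¹ * ‖w + (‖a - w‖ - ‖a‖) • normalize (a - w)‖ := by
        rw [hid, norm_smul, norm_inv, norm_norm]
    _ ≤ ‖a‖⁻¹ * (‖w‖ + ‖w‖ * 1) := by
        gcongr
        refine (norm_add_le _ _).trans (add_le_add le_rfl ?_)
        rw [norm_smul, Real.norm_eq_abs]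
        gcongr
        · simpa using abs_norm_sub_norm_le (a - w) a
        · exact norm_normalize_le_one _
    _ = 2 * ‖w‖ / ‖a‖ := by ring

end Normalize

section InnerProduct

variable {E : Type*} [NormedAddCommGroup E] [InnerProductSpace ℝ E]

-- The Fréchet derivative of `normalize` at `a ≠ 0`: `‖a‖⁻¹` times the projection onto `a^⊥`.
def normalizeDeriv (a w : E) : E :=
  ‖a‖⁻¹ • (w - (‖a‖ ^ 2)⁻¹ • (⟪a, w⟫ • a))

lemma norm_normalizeDeriv_le (a w : E) : ‖normalizeDeriv a w‖ ≤ 2 * ‖w‖ * ‖a‖⁻¹ := by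
  have hproj : ‖(‖a‖ ^ 2)⁻¹ • (⟪a, w⟫ • a)‖ ≤ ‖w‖ := by
    rcases eq_or_ne a 0 with rfl | ha
    · simp
    rw [norm_smul, norm_smul, norm_inv, norm_pow, norm_norm, Real.norm_eq_abs]
    calc (‖a‖ ^ 2)⁻¹ * (|⟪a, w⟫| * ‖a‖) ≤ (‖a‖ ^ 2)⁻¹ * (‖a‖ * ‖w‖ * ‖a‖) := by
          gcongr
          exact abs_real_inner_le_norm a w
      _ = ‖w‖ := by field_simp
  calc ‖normalizeDeriv a w‖ ≤ ‖a‖⁻¹ * (‖w‖ + ‖w‖) := by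
        rw [normalizeDeriv, norm_smul, norm_inv, norm_norm]
        gcongr
        exact (norm_sub_le _ _).trans (add_le_add le_rfl hproj)
    _ = 2 * ‖w‖ * ‖a‖⁻¹ := by ring

lemma abs_norm_sub_sub_norm_add_inner_le {a : E} (ha : a ≠ 0) (w : E) :
    |‖a - w‖ - ‖a‖ + ⟪normalize a, w⟫| ≤ 2 * ‖w‖ ^ 2 / ‖a‖ := by
  have hna : 0 < ‖a‖ := norm_pos_iff.mpr ha
  have hp : ‖a‖ * ⟪normalize a, w⟫ = ⟪a, w⟫ := by
    rw [NormedSpace.normalize, real_inner_smul_left, ← mul_assoc, mul_inv_cancel₀ hna.ne', one_mul]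
  set s := ‖a - w‖ - ‖a‖
  set p := ⟪normalize a, w⟫
  have hs : |s| ≤ ‖w‖ := by simpa using abs_norm_sub_norm_le (a - w) a
  have hp' : |p| ≤ ‖w‖ := (abs_real_inner_le_norm _ _).trans
    (mul_le_of_le_one_left (norm_nonneg _) (norm_normalize_le_one a))
  -- multiplying by `‖a - w‖ + ‖a‖` turns `s` into `‖a - w‖ ^ 2 - ‖a‖ ^ 2`, a polynomial in `w`
  have hkey : (s + p) * (‖a - w‖ + ‖a‖) = p * s + ‖w‖ ^ 2 := by
    linear_combination norm_sub_sq_real a w + 2 * hp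
  have hps : |p * s| ≤ ‖w‖ ^ 2 := by
    rw [abs_mul, sq]; exact mul_le_mul hp' hs (abs_nonneg _) (norm_nonneg _)
  rw [le_div_iff₀ hna]
  calc |s + p| * ‖a‖ ≤ |s + p| * (‖a - w‖ + ‖a‖) := by gcongr; linarith [norm_nonneg (a - w)]
    _ = |p * s + ‖w‖ ^ 2| := by
        rw [← hkey, abs_mul, abs_of_nonneg (by positivity : 0 ≤ ‖a - w‖ + ‖a‖)]
    _ ≤ 2 * ‖w‖ ^ 2 := by linarith [abs_add_le (p * s) (‖w‖ ^ 2), abs_of_nonneg (sq_nonneg ‖w‖)]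

lemma normalize_sub_normalize_sub_normalizeDeriv {a : E} (ha : a ≠ 0) (w : E) :
    normalize a - normalize (a - w) - normalizeDeriv a w =
      ‖a‖⁻¹ • ((‖a - w‖ - ‖a‖ + ⟪normalize a, w⟫) • normalize (a - w) +
        ⟪normalize a, w⟫ • (normalize a - normalize (a - w))) := by
  have hna : ‖a‖ ≠ 0 := norm_ne_zero_iff.mpr ha
  have hw : w = a - ‖a - w‖ • normalize (a - w) := by
    rw [NormedSpace.norm_smul_normalize, sub_sub_cancel]
  have hp : ⟪normalize a, w⟫ = ‖a‖⁻¹ * ⟪a, w⟫ := by rw [NormedSpace.normalize, real_inner_smul_left]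
  rw [hp, normalizeDeriv]
  -- `normalize (a - w)` may vanish, so only `a - w = ‖a - w‖ • normalize (a - w)` is used: after
  -- eliminating `w` this way both sides are linear combinations of `a` and `normalize (a - w)`
  generalize ⟪a, w⟫ = t
  generalize normalize (a - w) = n at hw ⊢
  generalize ‖a - w‖ = r at hw ⊢
  subst hw
  rw [NormedSpace.normalize]
  match_scalars <;> field_simp <;> ring

lemma norm_normalize_sub_normalize_sub_normalizeDeriv_le {a : E} (ha : a ≠ 0) (w : E) :
    ‖normalize a - normalize (a - w) - normalizeDeriv a w‖ ≤ 4 * ‖w‖ ^ 2 / ‖a‖ ^ 2 := by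
  have hna : 0 < ‖a‖ := norm_pos_iff.mpr ha
  have hp : |⟪normalize a, w⟫| ≤ ‖w‖ := (abs_real_inner_le_norm _ _).trans
    (mul_le_of_le_one_left (norm_nonneg _) (norm_normalize_le_one a))
  rw [normalize_sub_normalize_sub_normalizeDeriv ha, norm_smul, norm_inv, norm_norm]
  calc ‖a‖⁻¹ * ‖(‖a - w‖ - ‖a‖ + ⟪normalize a, w⟫) • normalize (a - w) +
        ⟪normalize a, w⟫ • (normalize a - normalize (a - w))‖
      ≤ ‖a‖⁻¹ * (2 * ‖w‖ ^ 2 / ‖a‖ * 1 + ‖w‖ * (2 * ‖w‖ / ‖a‖)) := by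
        gcongr
        refine (norm_add_le _ _).trans (add_le_add ?_ ?_) <;> rw [norm_smul, Real.norm_eq_abs]
        · exact mul_le_mul (abs_norm_sub_sub_norm_add_inner_le ha w) (norm_normalize_le_one _)
            (norm_nonneg _) (by positivity)
        · exact mul_le_mul hp (norm_normalize_sub_normalize_sub_le ha w) (norm_nonneg _)
            (norm_nonneg _)
    _ = 4 * ‖w‖ ^ 2 / ‖a‖ ^ 2 := by field_simp; ring

end InnerProduct

section Expectation

variable {Ω : Type*} [MeasurableSpace Ω] {P : Measure Ω} {E : Type*} [NormedAddCommGroup E]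

lemma MeasureTheory.AEStronglyMeasurable.inv_norm {f : Ω → E} (hf : AEStronglyMeasurable f P) :
    AEStronglyMeasurable (fun ω => ‖f ω‖⁻¹) P :=
  hf.norm.aemeasurable.inv.aestronglyMeasurable

lemma integrable_inv_norm_pow_of_lintegral_ne_top {f : Ω → E} (hf : AEStronglyMeasurable f P)
    (k : ℕ) (h : ∫⁻ ω, ((‖f ω‖₊ : ℝ≥0∞) ^ k)⁻¹ ∂P ≠ ∞) :
    Integrable (fun ω => (‖f ω‖ ^ k)⁻¹) P := by
  simpa using integrable_toReal_of_lintegral_ne_top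
    ((hf.enorm.pow_const k).inv) h

lemma integral_inv_norm_pow_le_of_lintegral_le {f : Ω → E} (hf : AEStronglyMeasurable f P)
    (k : ℕ) {C : ℝ} (hC : 0 ≤ C) (h : ∫⁻ ω, ((‖f ω‖₊ : ℝ≥0∞) ^ k)⁻¹ ∂P ≤ ENNReal.ofReal C) :
    ∫ ω, (‖f ω‖ ^ k)⁻¹ ∂P ≤ C := by
  have hm : AEMeasurable (fun ω => ((‖f ω‖₊ : ℝ≥0∞) ^ k)⁻¹) P := (hf.enorm.pow_const k).inv
  have hfin := (h.trans_lt ENNReal.ofReal_lt_top).ne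
  have hintegral := integral_toReal hm (ae_lt_top' hm hfin)
  simp only [ENNReal.toReal_inv, ENNReal.toReal_pow, ENNReal.coe_toReal, coe_nnnorm] at hintegral
  rw [hintegral]
  exact ENNReal.toReal_le_of_le_ofReal hC h

lemma ae_ne_zero_of_lintegral_inv_nnnorm_ne_top {f : Ω → E} (hf : AEStronglyMeasurable f P)
    (h : ∫⁻ ω, (‖f ω‖₊ : ℝ≥0∞)⁻¹ ∂P ≠ ∞) : ∀ᵐ ω ∂P, f ω ≠ 0 := by
  filter_upwards [ae_lt_top' hf.enorm.inv h] with ω hω h0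
  simp [h0] at hω

lemma integrable_normalize [NormedSpace ℝ E] [IsFiniteMeasure P] {f : Ω → E}
    (hf : AEStronglyMeasurable f P) : Integrable (fun ω => normalize (f ω)) P :=
  .of_bound (hf.inv_norm.smul hf) 1 (.of_forall fun _ => norm_normalize_le_one _)

variable [InnerProductSpace ℝ E]

lemma integrable_normalizeDeriv {a : Ω → E} (ha : AEStronglyMeasurable a P)
    (h1 : Integrable (fun ω => ‖a ω‖⁻¹) P) (w : E) :
    Integrable (fun ω => normalizeDeriv (a ω) w) P := by
  refine (h1.const_mul (2 * ‖w‖)).mono' ?_ (.of_forall fun ω => norm_normalizeDeriv_le _ _)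
  exact ha.inv_norm.smul (aestronglyMeasurable_const.sub
    ((ha.norm.pow 2).aemeasurable.inv.aestronglyMeasurable.smul
      ((ha.inner aestronglyMeasurable_const).smul ha)))

lemma norm_integral_normalize_sub_normalize_sub_normalizeDeriv_le [CompleteSpace E]
    [IsFiniteMeasure P] {a : Ω → E} (ha : AEStronglyMeasurable a P) (h0 : ∀ᵐ ω ∂P, a ω ≠ 0)
    (h1 : Integrable (fun ω => ‖a ω‖⁻¹) P) (h2 : Integrable (fun ω => (‖a ω‖ ^ 2)⁻¹) P)
    (w : E) :
    ‖∫ ω, normalize (a ω) ∂P - ∫ ω, normalize (a ω - w) ∂P - ∫ ω, normalizeDeriv (a ω) w ∂P‖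
      ≤ 4 * ‖w‖ ^ 2 * ∫ ω, (‖a ω‖ ^ 2)⁻¹ ∂P := by
  have hn := integrable_normalize ha
  have hnw := integrable_normalize (f := fun ω => a ω - w) (ha.sub aestronglyMeasurable_const)
  have hnD : Integrable (fun ω => normalize (a ω) - normalize (a ω - w)) P := hn.sub hnw
  have hD := integrable_normalizeDeriv ha h1 w
  rw [← integral_sub hn hnw, ← integral_sub hnD hD, ← integral_const_mul]
  refine (norm_integral_le_integral_norm _).trans
    (integral_mono_ae (hnD.sub hD).norm (h2.const_mul _) ?_)
  filter_upwards [h0] with ω hω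
  simpa [div_eq_mul_inv] using norm_normalize_sub_normalize_sub_normalizeDeriv_le hω w

end Expectation

lemma continuous_Ymat {d : ℕ} (h : EuclideanSpace ℝ (Fin d)) :
    Continuous fun x : EuclideanSpace ℝ (Fin d) => Ymat x h :=
  (PiLp.continuous_toLp 2 _).comp (continuous_pi fun _ => by fun_prop)

theorem stmt_6_general
    {d : ℕ} (P : Measure Ω) [IsProbabilityMeasure P]
    (X : Ω → EuclideanSpace ℝ (Fin d)) (hX : Measurable X)
    (Γ : Mat d)
    -- Assumption 3(b)
    (C : ℝ) (hC : 0 < C)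
    (hA3 : ∀ (h : EuclideanSpace ℝ (Fin d)) (V : Mat d),
      (∫⁻ ω, (‖Ymat (X ω) h - V‖₊ : ℝ≥0∞)⁻¹ ∂P) ≤ ENNReal.ofReal C ∧
      (∫⁻ ω, ((‖Ymat (X ω) h - V‖₊ : ℝ≥0∞) ^ 2)⁻¹ ∂P) ≤ ENNReal.ofReal C)
    :
    ∀ (h : EuclideanSpace ℝ (Fin d)) (V : Mat d),
      ‖gradG P X h V - gradG P X h Γ - hessG P X h Γ (V - Γ)‖ ≤ 6 * C * ‖V - Γ‖ ^ 2 := by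
  intro h V
  obtain ⟨h1, h2⟩ := hA3 h Γ
  have ha : AEStronglyMeasurable (fun ω => Ymat (X ω) h - Γ) P :=
    ((continuous_Ymat h).measurable.comp hX).aestronglyMeasurable.sub aestronglyMeasurable_const
  have h1_ne_top := (h1.trans_lt ENNReal.ofReal_lt_top).ne
  have hint1 := integrable_inv_norm_pow_of_lintegral_ne_top ha 1 (by simpa using h1_ne_top)
  have hint2 := integrable_inv_norm_pow_of_lintegral_ne_top ha 2
    (h2.trans_lt ENNReal.ofReal_lt_top).ne
  have hremainder := norm_integral_normalize_sub_normalize_sub_normalizeDeriv_le ha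
    (ae_ne_zero_of_lintegral_inv_nnnorm_ne_top ha h1_ne_top) (by simpa using hint1) hint2 (V - Γ)
  simp only [sub_sub_sub_cancel_right] at hremainder
  calc ‖gradG P X h V - gradG P X h Γ - hessG P X h Γ (V - Γ)‖
      = ‖∫ ω, normalize (Ymat (X ω) h - Γ) ∂P - ∫ ω, normalize (Ymat (X ω) h - V) ∂P
          - ∫ ω, normalizeDeriv (Ymat (X ω) h - Γ) (V - Γ) ∂P‖ := by
        rw [gradG, gradG, neg_sub_neg]; rfl
    _ ≤ 4 * ‖V - Γ‖ ^ 2 * ∫ ω, (‖Ymat (X ω) h - Γ‖ ^ 2)⁻¹ ∂P := hremainder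
    _ ≤ 4 * ‖V - Γ‖ ^ 2 * C := by
        gcongr
        exact integral_inv_norm_pow_le_of_lintegral_le ha 2 hC.le h2
    _ ≤ 6 * C * ‖V - Γ‖ ^ 2 := by nlinarith [sq_nonneg ‖V - Γ‖]

/-- Uniform quadratic bound on the second-order Taylor remainder of the gradient of `G_h`
at `Γ_m`: `‖∇G_h(V) − ∇G_h(Γ_m) − ∇²G_h(Γ_m)(V − Γ_m)‖_F ≤ 6C ‖V − Γ_m‖_F²`. -/
theorem stmt_6
    {d : ℕ} (hd : 1 ≤ d) (P : Measure Ω) [IsProbabilityMeasure P]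
    (X : Ω → EuclideanSpace ℝ (Fin d)) (hX : Measurable X)
    -- `m` is the geometric median of `X`: the unique minimizer of `u ↦ E[‖X − u‖ − ‖X‖]`
    (m : EuclideanSpace ℝ (Fin d))
    (hm : ∀ u, (∫ ω, (‖X ω - m‖ - ‖X ω‖) ∂P) ≤ ∫ ω, (‖X ω - u‖ - ‖X ω‖) ∂P)
    (hm_unique : ∀ u, (∀ v, (∫ ω, (‖X ω - u‖ - ‖X ω‖) ∂P) ≤
      ∫ ω, (‖X ω - v‖ - ‖X ω‖) ∂P) → u = m)
    -- `Γ` is the median covariation matrix: the unique minimizer of `G_m`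
    (Γ : Mat d)
    (hΓ : ∀ V, Gfun P X m Γ ≤ Gfun P X m V)
    (hΓ_unique : ∀ V, (∀ W, Gfun P X m V ≤ Gfun P X m W) → V = Γ)
    -- Assumption 1
    (hA1 : ∃ u₁ u₂ : EuclideanSpace ℝ (Fin d), ‖u₁‖ = 1 ∧ ‖u₂‖ = 1 ∧
      LinearIndependent ℝ ![u₁, u₂] ∧
      0 < evariance (fun ω => ⟪u₁, X ω⟫) P ∧ 0 < evariance (fun ω => ⟪u₂, X ω⟫) P)
    -- Assumption 2
    (hA2 : ∃ V₁ V₂ : Mat d, ‖V₁‖ = 1 ∧ ‖V₂‖ = 1 ∧ LinearIndependent ℝ ![V₁, V₂] ∧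
      0 < evariance (fun ω => ⟪V₁, Ymat (X ω) m⟫) P ∧
      0 < evariance (fun ω => ⟪V₂, Ymat (X ω) m⟫) P)
    -- Assumption 3(b)
    (C : ℝ) (hC : 0 < C)
    (hA3 : ∀ (h : EuclideanSpace ℝ (Fin d)) (V : Mat d),
      (∫⁻ ω, (‖Ymat (X ω) h - V‖₊ : ℝ≥0∞)⁻¹ ∂P) ≤ ENNReal.ofReal C ∧
      (∫⁻ ω, ((‖Ymat (X ω) h - V‖₊ : ℝ≥0∞) ^ 2)⁻¹ ∂P) ≤ ENNReal.ofReal C)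
    :
    ∀ (h : EuclideanSpace ℝ (Fin d)) (V : Mat d),
      ‖gradG P X h V - gradG P X h Γ - hessG P X h Γ (V - Γ)‖ ≤ 6 * C * ‖V - Γ‖ ^ 2 :=
  stmt_6_general P X hX Γ C hC hA3
end
end

section
/- Let 0 < α < 1, β ≥ 0, c_u > 0, c_v > 0, and set u_n := c_u n^{−α} and v_n := c_v n^{−β} for n ≥ 1. Then: (i) there are positive constants c₀ and K such that for all n ≥ 1, Σ_{k=1}^{⌊n/2⌋} e^{−Σ_{j=k}^{n} u_j} u_k v_k ≤ K e^{−c₀ n^{1−α}}; and (ii) there is a positive constant K' such that for all n ≥ 1, Σ_{k=⌊n/2⌋+1}^{n} e^{−Σ_{j=k}^{n} u_j} u_k v_k ≤ K' v_n. -/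
/-!
Write `S_k = ∑_{j=k}^n u_j`. Since `1 + u ≤ e^u`, each weight satisfies
`e^{-S_k} u_k ≤ e^{-S_{k+1}} - e^{-S_k}`, so `∑_{k=a}^b e^{-S_k} u_k ≤ e^{-S_{b+1}}` by telescoping.
For `k > n/2` the factor `v_k` is at most `2^β v_n`, and `S_{n+1} = 0`; this gives (ii).
For `k ≤ n/2` the factor `v_k` is at most `c_v`, while `S_{⌊n/2⌋+1}` has at least `n/2` terms,
each at least `c_u n^{-α}`, so it is at least `(c_u/2) n^{1-α}`; this gives (i).
-/

open Finset Real

theorem exp_neg_add_mul_le_sub (u T : ℝ) : exp (-(u + T)) * u ≤ exp (-T) - exp (-(u + T)) := by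
  have h : exp (-(u + T)) * exp u = exp (-T) := by rw [← exp_add]; ring_nf
  nlinarith [add_one_le_exp u, exp_pos (-(u + T))]

theorem sum_Icc_exp_neg_mul_le_of_eq_add (S u : ℕ → ℝ) {a b : ℕ} (hab : a ≤ b)
    (hS : ∀ k ∈ Icc a b, S k = u k + S (k + 1)) :
    ∑ k ∈ Icc a b, exp (-S k) * u k ≤ exp (-S (b + 1)) - exp (-S a) := by
  rw [← sum_Icc_sub hab (fun k => exp (-S k))]
  refine sum_le_sum fun k hk => ?_
  rw [hS k hk]
  exact exp_neg_add_mul_le_sub _ _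

theorem sum_Icc_exp_neg_tail_mul_mul_le (u w : ℕ → ℝ) {a b n : ℕ} {C : ℝ} (hbn : b ≤ n)
    (hC : 0 ≤ C) (hu : ∀ k ∈ Icc a b, 0 ≤ u k) (hw : ∀ k ∈ Icc a b, w k ≤ C) :
    ∑ k ∈ Icc a b, exp (-∑ j ∈ Icc k n, u j) * u k * w k ≤
      C * exp (-∑ j ∈ Icc (b + 1) n, u j) := by
  rcases lt_or_ge b a with hba | hab
  · rw [Icc_eq_empty_of_lt hba, sum_empty]
    positivity
  have htail : ∀ k ∈ Icc a b, ∑ j ∈ Icc k n, u j = u k + ∑ j ∈ Icc (k + 1) n, u j :=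
    fun k hk => by
      rw [Icc_add_one_left_eq_Ioc, add_sum_Ioc_eq_sum_Icc ((mem_Icc.1 hk).2.trans hbn)]
  calc ∑ k ∈ Icc a b, exp (-∑ j ∈ Icc k n, u j) * u k * w k
      ≤ ∑ k ∈ Icc a b, exp (-∑ j ∈ Icc k n, u j) * u k * C :=
        sum_le_sum fun k hk =>
          mul_le_mul_of_nonneg_left (hw k hk) (mul_nonneg (exp_pos _).le (hu k hk))
    _ = C * ∑ k ∈ Icc a b, exp (-∑ j ∈ Icc k n, u j) * u k := by rw [← sum_mul, mul_comm]
    _ ≤ C * (exp (-∑ j ∈ Icc (b + 1) n, u j) - exp (-∑ j ∈ Icc a n, u j)) :=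
        mul_le_mul_of_nonneg_left (sum_Icc_exp_neg_mul_le_of_eq_add _ u hab htail) hC
    _ ≤ C * exp (-∑ j ∈ Icc (b + 1) n, u j) :=
        mul_le_mul_of_nonneg_left (sub_le_self _ (exp_pos _).le) hC

theorem rpow_one_sub_div_two_le_sum_Icc_rpow_neg {α : ℝ} (hα : 0 ≤ α) {n : ℕ} (hn : 0 < n) :
    (n : ℝ) ^ (1 - α) / 2 ≤ ∑ j ∈ Icc (n / 2 + 1) n, (j : ℝ) ^ (-α) := by
  have hterm : ∀ j ∈ Icc (n / 2 + 1) n, (n : ℝ) ^ (-α) ≤ (j : ℝ) ^ (-α) := fun j hj => by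
    have hj := mem_Icc.1 hj
    exact rpow_le_rpow_of_nonpos (by exact_mod_cast (by omega : 0 < j))
      (by exact_mod_cast hj.2) (neg_nonpos.2 hα)
  have hcard : (n : ℝ) / 2 ≤ #(Icc (n / 2 + 1) n) := by
    have : n ≤ 2 * #(Icc (n / 2 + 1) n) := by rw [Nat.card_Icc]; omega
    have : (n : ℝ) ≤ 2 * #(Icc (n / 2 + 1) n) := by exact_mod_cast this
    linarith
  calc (n : ℝ) ^ (1 - α) / 2 = (n : ℝ) / 2 * (n : ℝ) ^ (-α) := by
        rw [sub_eq_add_neg, rpow_add (Nat.cast_pos.2 hn), rpow_one]; ring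
    _ ≤ #(Icc (n / 2 + 1) n) * (n : ℝ) ^ (-α) :=
        mul_le_mul_of_nonneg_right hcard (by positivity)
    _ ≤ ∑ j ∈ Icc (n / 2 + 1) n, (j : ℝ) ^ (-α) := by
        rw [← nsmul_eq_mul]; exact card_nsmul_le_sum _ _ _ hterm

theorem rpow_neg_le_two_rpow_mul_rpow_neg {β x y : ℝ} (hβ : 0 ≤ β) (hy : 0 < y)
    (hyx : y ≤ 2 * x) : x ^ (-β) ≤ 2 ^ β * y ^ (-β) := by
  have hx : 0 < x := by linarith
  calc x ^ (-β) = 2 ^ β * (2 * x) ^ (-β) := by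
        rw [mul_rpow zero_le_two hx.le, ← mul_assoc, ← rpow_add two_pos, add_neg_cancel,
          rpow_zero, one_mul]
    _ ≤ 2 ^ β * y ^ (-β) :=
        mul_le_mul_of_nonneg_left (rpow_le_rpow_of_nonpos hy hyx (neg_nonpos.2 hβ))
          (by positivity)

theorem stmt_15_general (α β cu cv : ℝ) (hα0 : 0 < α) (hβ : 0 ≤ β)
    (hcu : 0 < cu) (hcv : 0 < cv) :
    (∃ c₀ K : ℝ, 0 < c₀ ∧ 0 < K ∧ ∀ n : ℕ, 1 ≤ n →
      ∑ k ∈ Finset.Icc 1 (n / 2),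
        Real.exp (-(∑ j ∈ Finset.Icc k n, cu * (j : ℝ) ^ (-α))) *
          (cu * (k : ℝ) ^ (-α)) * (cv * (k : ℝ) ^ (-β)) ≤
        K * Real.exp (-c₀ * (n : ℝ) ^ (1 - α))) ∧
    (∃ K' : ℝ, 0 < K' ∧ ∀ n : ℕ, 1 ≤ n →
      ∑ k ∈ Finset.Icc (n / 2 + 1) n,
        Real.exp (-(∑ j ∈ Finset.Icc k n, cu * (j : ℝ) ^ (-α))) *
          (cu * (k : ℝ) ^ (-α)) * (cv * (k : ℝ) ^ (-β)) ≤
        K' * (cv * (n : ℝ) ^ (-β))) := by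
  have hu : ∀ j : ℕ, 0 ≤ cu * (j : ℝ) ^ (-α) := fun j => by positivity
  refine ⟨⟨cu / 2, cv, by positivity, hcv, fun n hn => ?_⟩, ⟨2 ^ β, by positivity, fun n hn => ?_⟩⟩
  · have hv : ∀ k ∈ Icc 1 (n / 2), cv * (k : ℝ) ^ (-β) ≤ cv := fun k hk =>
      mul_le_of_le_one_right hcv.le (rpow_le_one_of_one_le_of_nonpos
        (by exact_mod_cast (mem_Icc.1 hk).1) (neg_nonpos.2 hβ))
    have hS := rpow_one_sub_div_two_le_sum_Icc_rpow_neg hα0.le hn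
    refine (sum_Icc_exp_neg_tail_mul_mul_le _ _ (Nat.div_le_self n 2) hcv.le
      (fun k _ => hu k) hv).trans ?_
    rw [← mul_sum]
    gcongr
    nlinarith
  · have hv : ∀ k ∈ Icc (n / 2 + 1) n, cv * (k : ℝ) ^ (-β) ≤ 2 ^ β * (cv * (n : ℝ) ^ (-β)) :=
      fun k hk => by
        have hk := mem_Icc.1 hk
        rw [mul_left_comm]
        exact mul_le_mul_of_nonneg_left (rpow_neg_le_two_rpow_mul_rpow_neg hβ
          (by exact_mod_cast hn) (by exact_mod_cast (by omega : n ≤ 2 * k))) hcv.le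
    simpa using sum_Icc_exp_neg_tail_mul_mul_le _ _ le_rfl (by positivity) (fun k _ => hu k) hv

/-- Asymptotic behaviour of exponentially weighted sums (Lemma 5.6 of the paper): with
`u_n = c_u n^{−α}` (`0 < α < 1`) and `v_n = c_v n^{−β}` (`β ≥ 0`),
(i) `∑_{k=1}^{⌊n/2⌋} e^{−∑_{j=k}^n u_j} u_k v_k ≤ K e^{−c₀ n^{1−α}}` and
(ii) `∑_{k=⌊n/2⌋+1}^{n} e^{−∑_{j=k}^n u_j} u_k v_k ≤ K' v_n`, for all `n ≥ 1`. -/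
theorem stmt_15 (α β cu cv : ℝ) (hα0 : 0 < α) (hα1 : α < 1) (hβ : 0 ≤ β)
    (hcu : 0 < cu) (hcv : 0 < cv) :
    (∃ c₀ K : ℝ, 0 < c₀ ∧ 0 < K ∧ ∀ n : ℕ, 1 ≤ n →
      ∑ k ∈ Finset.Icc 1 (n / 2),
        Real.exp (-(∑ j ∈ Finset.Icc k n, cu * (j : ℝ) ^ (-α))) *
          (cu * (k : ℝ) ^ (-α)) * (cv * (k : ℝ) ^ (-β)) ≤
        K * Real.exp (-c₀ * (n : ℝ) ^ (1 - α))) ∧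
    (∃ K' : ℝ, 0 < K' ∧ ∀ n : ℕ, 1 ≤ n →
      ∑ k ∈ Finset.Icc (n / 2 + 1) n,
        Real.exp (-(∑ j ∈ Finset.Icc k n, cu * (j : ℝ) ^ (-α))) *
          (cu * (k : ℝ) ^ (-α)) * (cv * (k : ℝ) ^ (-β)) ≤
        K' * (cv * (n : ℝ) ^ (-β))) :=
  stmt_15_general α β cu cv hα0 hβ hcu hcv
end

section
/- Suppose Γ_m ∈ S(H) satisfies E[(Y(m) − Γ_m)/‖Y(m) − Γ_m‖_F] = 0 (the first-order condition satisfied by the median covariation matrix under Assumptions 1, 2 and 3(a)). Then Γ_m satisfies the fixed-point equation Γ_m = E[Y(m)/‖Y(m) − Γ_m‖_F] / E[1/‖Y(m) − Γ_m‖_F], and consequently Γ_m is a symmetric, positive semidefinite matrix. -/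
open MeasureTheory ProbabilityTheory Filter
open scoped ENNReal NNReal RealInnerProductSpace BigOperators

noncomputable section

variable {d : ℕ} {Ω : Type*} [MeasurableSpace Ω]

/-- If `Γ_m` satisfies the first-order condition `E[(Y(m) − Γ_m)/‖Y(m) − Γ_m‖_F] = 0`, then it
satisfies the fixed-point equation
`Γ_m = E[Y(m)/‖Y(m) − Γ_m‖_F] / E[1/‖Y(m) − Γ_m‖_F]`, and consequently `Γ_m` is a symmetric
positive semidefinite matrix. -/
theorem stmt_16
    {d : ℕ} (hd : 1 ≤ d) (P : Measure Ω) [IsProbabilityMeasure P]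
    (X : Ω → EuclideanSpace ℝ (Fin d)) (hX : Measurable X)
    -- `m` is the geometric median of `X`
    (m : EuclideanSpace ℝ (Fin d))
    (hm : ∀ u, (∫ ω, (‖X ω - m‖ - ‖X ω‖) ∂P) ≤ ∫ ω, (‖X ω - u‖ - ‖X ω‖) ∂P)
    (hm_unique : ∀ u, (∀ v, (∫ ω, (‖X ω - u‖ - ‖X ω‖) ∂P) ≤
      ∫ ω, (‖X ω - v‖ - ‖X ω‖) ∂P) → u = m)
    -- Assumption 3(a)
    (C : ℝ) (hC : 0 < C)
    (hA3 : ∀ (h : EuclideanSpace ℝ (Fin d)) (V : Mat d),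
      (∫⁻ ω, (‖Ymat (X ω) h - V‖₊ : ℝ≥0∞)⁻¹ ∂P) ≤ ENNReal.ofReal C)
    (Γ : Mat d)
    (hpos : 0 < ∫ ω, ‖Ymat (X ω) m - Γ‖⁻¹ ∂P)
    -- first-order condition `E[(Y(m) − Γ_m)/‖Y(m) − Γ_m‖_F] = 0`
    (hfix : (∫ ω, ‖Ymat (X ω) m - Γ‖⁻¹ • (Ymat (X ω) m - Γ) ∂P) = 0) :
    Γ = (∫ ω, ‖Ymat (X ω) m - Γ‖⁻¹ ∂P)⁻¹ •
        (∫ ω, ‖Ymat (X ω) m - Γ‖⁻¹ • Ymat (X ω) m ∂P) ∧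
    (∀ i j : Fin d, Γ (i, j) = Γ (j, i)) ∧
    (∀ v : Fin d → ℝ, 0 ≤ ∑ i, ∑ j, v i * Γ (i, j) * v j) := by
  classical
  set w : Ω → ℝ := fun ω => ‖Ymat (X ω) m - Γ‖ with hw
  set Y : Ω → Mat d := fun ω => Ymat (X ω) m with hYdef
  -- measurability
  have hYcont : Continuous fun x : EuclideanSpace ℝ (Fin d) => Ymat x m := by
    apply (PiLp.continuous_toLp 2 (fun _ : Fin d × Fin d => ℝ)).comp
    exact continuous_pi fun p =>
      (((EuclideanSpace.proj p.1 : EuclideanSpace ℝ (Fin d) →L[ℝ] ℝ).continuous.sub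
        continuous_const).mul
        ((EuclideanSpace.proj p.2 : EuclideanSpace ℝ (Fin d) →L[ℝ] ℝ).continuous.sub
        continuous_const))
  have hYmeas : Measurable Y := hYcont.measurable.comp hX
  have hwmeas : Measurable w := (hYmeas.sub measurable_const).norm
  have hwinv_meas : Measurable fun ω => (w ω)⁻¹ := hwmeas.inv
  -- integrability of w⁻¹
  have hwinv_int : Integrable (fun ω => (w ω)⁻¹) P := by
    refine ⟨hwinv_meas.aestronglyMeasurable, ?_⟩
    show (∫⁻ ω, (‖(w ω)⁻¹‖₊ : ℝ≥0∞) ∂P) < ⊤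
    refine lt_of_le_of_lt (le_trans (lintegral_mono fun ω => ?_) (hA3 m Γ)) ENNReal.ofReal_lt_top
    rcases eq_or_ne (w ω) 0 with h0 | h0
    · simp [h0]
    · have hne : (‖Ymat (X ω) m - Γ‖₊ : ℝ≥0) ≠ 0 := by
        simpa [hw, nnnorm_eq_zero, norm_eq_zero, ← norm_eq_zero] using h0
      rw [← ENNReal.coe_inv hne]
      norm_cast
      simp [hw, nnnorm_inv]
  -- integrability of w⁻¹ • (Y - Γ)
  have hbd : Integrable (fun ω => (w ω)⁻¹ • (Y ω - Γ)) P := by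
    refine Integrable.mono' (integrable_const (1 : ℝ))
      ((hwinv_meas.aestronglyMeasurable).smul
        ((hYmeas.sub measurable_const).aestronglyMeasurable)) ?_
    refine Filter.Eventually.of_forall fun ω => ?_
    have hYw : ‖Y ω - Γ‖ = w ω := rfl
    rw [norm_smul, hYw, Real.norm_eq_abs,
      abs_of_nonneg (inv_nonneg.mpr (norm_nonneg (Ymat (X ω) m - Γ)))]
    rcases eq_or_ne (w ω) 0 with h0 | h0
    · rw [h0]; simp
    · rw [inv_mul_cancel₀ h0]
  -- integrability of w⁻¹ • Y
  have hintY : Integrable (fun ω => (w ω)⁻¹ • Y ω) P := by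
    have heq : (fun ω => (w ω)⁻¹ • Y ω)
        = fun ω => (w ω)⁻¹ • (Y ω - Γ) + (w ω)⁻¹ • Γ := by
      funext ω; rw [← smul_add]; congr 1; abel
    rw [heq]
    exact hbd.add (hwinv_int.smul_const Γ)
  set c : ℝ := ∫ ω, (w ω)⁻¹ ∂P with hc
  have hcne : c ≠ 0 := ne_of_gt hpos
  -- fixed point equation
  have hkey : c • Γ = ∫ ω, (w ω)⁻¹ • Y ω ∂P := by
    have hsub : (∫ ω, (w ω)⁻¹ • (Y ω - Γ) ∂P)
        = (∫ ω, (w ω)⁻¹ • Y ω ∂P) - ∫ ω, (w ω)⁻¹ • Γ ∂P := by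
      rw [← integral_sub hintY (hwinv_int.smul_const Γ)]
      congr 1; funext ω; rw [← smul_sub]
    have h0 : (0 : Mat d) = (∫ ω, (w ω)⁻¹ • Y ω ∂P) - ∫ ω, (w ω)⁻¹ • Γ ∂P := by
      rw [← hsub]; exact hfix.symm
    rw [integral_smul_const (μ := P) (fun ω => (w ω)⁻¹) Γ] at h0
    exact (sub_eq_zero.mp h0.symm).symm
  have hΓeq : Γ = c⁻¹ • ∫ ω, (w ω)⁻¹ • Y ω ∂P := by
    rw [← hkey, smul_smul, inv_mul_cancel₀ hcne, one_smul]
  -- componentwise formula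
  have hcoordeq : ∀ (ω : Ω) (p : Fin d × Fin d),
      (EuclideanSpace.proj p : Mat d →L[ℝ] ℝ) ((w ω)⁻¹ • Y ω)
        = (w ω)⁻¹ * (((X ω) p.1 - m p.1) * ((X ω) p.2 - m p.2)) := by
    intro ω p
    have h1 : (EuclideanSpace.proj p : Mat d →L[ℝ] ℝ) ((w ω)⁻¹ • Y ω)
        = (w ω)⁻¹ * (Y ω p) := rfl
    rw [h1]
    rfl
  have hcomp : ∀ p : Fin d × Fin d,
      Γ p = c⁻¹ * ∫ ω, (w ω)⁻¹ * (((X ω) p.1 - m p.1) * ((X ω) p.2 - m p.2)) ∂P := by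
    intro p
    have h1 : Γ p = c⁻¹ * (∫ ω, (w ω)⁻¹ • Y ω ∂P) p := by
      rw [hΓeq]; rfl
    rw [h1]
    congr 1
    calc integral P (fun ω => (w ω)⁻¹ • Y ω) p
        = (EuclideanSpace.proj p : Mat d →L[ℝ] ℝ) (∫ ω, (w ω)⁻¹ • Y ω ∂P) := rfl
      _ = ∫ ω, (EuclideanSpace.proj p : Mat d →L[ℝ] ℝ) ((w ω)⁻¹ • Y ω) ∂P :=
          ((EuclideanSpace.proj p : Mat d →L[ℝ] ℝ).integral_comp_comm hintY).symm
      _ = ∫ ω, (w ω)⁻¹ * (((X ω) p.1 - m p.1) * ((X ω) p.2 - m p.2)) ∂P :=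
          integral_congr_ae (Filter.Eventually.of_forall fun ω => hcoordeq ω p)
  have hcoord_int : ∀ p : Fin d × Fin d,
      Integrable (fun ω => (w ω)⁻¹ * (((X ω) p.1 - m p.1) * ((X ω) p.2 - m p.2))) P := by
    intro p
    have := (EuclideanSpace.proj p : Mat d →L[ℝ] ℝ).integrable_comp hintY
    refine this.congr (Filter.Eventually.of_forall fun ω => hcoordeq ω p)
  refine ⟨hΓeq, ?_, ?_⟩
  · -- symmetry
    intro i j
    rw [hcomp (i, j), hcomp (j, i)]
    have : (∫ ω, (w ω)⁻¹ * (((X ω) i - m i) * ((X ω) j - m j)) ∂P)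
        = ∫ ω, (w ω)⁻¹ * (((X ω) j - m j) * ((X ω) i - m i)) ∂P :=
      integral_congr_ae (Filter.Eventually.of_forall fun ω => by ring)
    rw [this]
  · -- positive semidefinite
    intro v
    have h1 : ∀ i j : Fin d, v i * Γ (i, j) * v j
        = ∫ ω, c⁻¹ * (v i * v j *
            ((w ω)⁻¹ * (((X ω) i - m i) * ((X ω) j - m j)))) ∂P := by
      intro i j
      rw [hcomp (i, j)]
      calc v i * (c⁻¹ * ∫ ω, (w ω)⁻¹ * (((X ω) i - m i) * ((X ω) j - m j)) ∂P) * v j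
          = (c⁻¹ * (v i * v j)) *
            ∫ ω, (w ω)⁻¹ * (((X ω) i - m i) * ((X ω) j - m j)) ∂P := by ring
        _ = ∫ ω, (c⁻¹ * (v i * v j)) *
              ((w ω)⁻¹ * (((X ω) i - m i) * ((X ω) j - m j))) ∂P :=
            (integral_const_mul _ _).symm
        _ = ∫ ω, c⁻¹ * (v i * v j *
              ((w ω)⁻¹ * (((X ω) i - m i) * ((X ω) j - m j)))) ∂P :=
            integral_congr_ae (Filter.Eventually.of_forall fun ω => by ring)
    have hint2 : ∀ i j : Fin d, Integrable (fun ω => c⁻¹ * (v i * v j *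
        ((w ω)⁻¹ * (((X ω) i - m i) * ((X ω) j - m j))))) P := by
      intro i j
      exact ((hcoord_int (i, j)).const_mul (v i * v j)).const_mul c⁻¹
    calc ∑ i, ∑ j, v i * Γ (i, j) * v j
        = ∑ i, ∫ ω, ∑ j, c⁻¹ * (v i * v j *
            ((w ω)⁻¹ * (((X ω) i - m i) * ((X ω) j - m j)))) ∂P := by
          refine Finset.sum_congr rfl fun i _ => ?_
          simp_rw [h1 i]
          exact (integral_finset_sum _ fun j _ => hint2 i j).symm
      _ = ∫ ω, ∑ i, ∑ j, c⁻¹ * (v i * v j *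
            ((w ω)⁻¹ * (((X ω) i - m i) * ((X ω) j - m j)))) ∂P :=
          (integral_finset_sum _ fun i _ =>
            integrable_finset_sum _ fun j _ => hint2 i j).symm
      _ ≥ 0 := by
          refine le_of_eq_of_le rfl (integral_nonneg fun ω => ?_)
          have heq : ∑ i, ∑ j, c⁻¹ * (v i * v j *
              ((w ω)⁻¹ * (((X ω) i - m i) * ((X ω) j - m j))))
              = c⁻¹ * ((w ω)⁻¹ * (∑ i, v i * ((X ω) i - m i))^2) := by
            rw [sq, Finset.sum_mul_sum]
            simp only [Finset.mul_sum]
            exact Finset.sum_congr rfl fun i _ => Finset.sum_congr rfl fun j _ => by ring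
          rw [heq]
          exact mul_nonneg (inv_nonneg.mpr hpos.le)
            (mul_nonneg (inv_nonneg.mpr (norm_nonneg _)) (sq_nonneg _))
end
end

section
/- Let E be a finite-dimensional real inner product space and T : E → E a self-adjoint linear operator such that λ ‖x‖² ≤ ⟨Tx, x⟩ ≤ C ‖x‖² for all x ∈ E, with constants 0 < λ ≤ C. Let α ∈ (1/2,1), c_γ > 0, and γ_k := c_γ k^{−α}. Then there exist positive constants c₀ and c₁ such that for all n ≥ 1: ‖∏_{k=1}^{n−1}(Id − γ_k T)‖_op ≤ c₀ exp(−λ Σ_{k=1}^{n} γ_k), and for all 1 ≤ k ≤ n−1: ‖∏_{j=k+1}^{n−1}(Id − γ_j T)‖_op ≤ c₁ exp(−λ Σ_{j=k}^{n} γ_j), where ‖·‖_op denotes the operator norm and the products are taken in any order (the factors commute); an empty product equals Id. -/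
/-! Once `γ_k C ≤ 1`, the factor `Id − γ_k T` is self-adjoint with quadratic form between `0` and
`(1 − γ_k λ)‖x‖²`, so its norm is at most `1 − γ_k λ ≤ exp(−λ γ_k)`. As `γ_k → 0` this holds for all
`k ≥ N`, and each of the finitely many earlier factors exceeds `exp(−λ γ_k)` by at most the constant
factor `exp(c_γ (‖T‖ + λ))`. The terms `γ_k, γ_n ≤ c_γ` of the sums that have no factor in the
products are absorbed into `c₀` and `c₁`. -/

open scoped BigOperators RealInnerProductSpace

noncomputable section

/-- The ordered product `∏_{k=a}^{b} (Id − γ_k T)` of commuting operators (the value is `Id`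
when the index range `[a, b]` is empty). -/
noncomputable def prodIcc {E : Type*} [NormedAddCommGroup E] [NormedSpace ℝ E]
    (T : E →L[ℝ] E) (γ : ℕ → ℝ) (a : ℕ) : ℕ → (E →L[ℝ] E)
  | 0 => if a = 0 then 1 - γ 0 • T else 1
  | b + 1 => if a ≤ b + 1 then (1 - γ (b + 1) • T) * prodIcc T γ a b else 1

open Filter Topology Finset

section Contraction

variable {E : Type*} [NormedAddCommGroup E] [InnerProductSpace ℝ E]

theorem ContinuousLinearMap.norm_le_of_abs_inner_le {S : E →L[ℝ] E} (hS : S.IsSymmetric)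
    {M : ℝ} (hM : 0 ≤ M) (h : ∀ x, |⟪S x, x⟫| ≤ M * ‖x‖ ^ 2) : ‖S‖ ≤ M := by
  rw [S.norm_eq_iSup_rayleighQuotient hS]
  refine ciSup_le fun x => ?_
  rcases eq_or_ne x 0 with rfl | hx
  · simpa using hM
  · rw [rayleighQuotient, reApplyInnerSelf_apply, RCLike.re_to_real, abs_div, abs_sq,
      div_le_iff₀ (by positivity)]
    exact h x

theorem ContinuousLinearMap.norm_one_sub_smul_le {T : E →L[ℝ] E} (hT : T.IsSymmetric)
    {lam C g : ℝ} (hlamC : lam ≤ C) (hlow : ∀ x : E, lam * ‖x‖ ^ 2 ≤ ⟪T x, x⟫)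
    (hup : ∀ x : E, ⟪T x, x⟫ ≤ C * ‖x‖ ^ 2) (hg : 0 ≤ g) (hgC : g * C ≤ 1) :
    ‖1 - g • T‖ ≤ 1 - g * lam := by
  have hS : (1 - g • T).IsSymmetric := fun x y => by
    simp only [toLinearMap_sub, toLinearMap_one, toLinearMap_smul, LinearMap.sub_apply,
      Module.End.one_apply, LinearMap.smul_apply, coe_coe, inner_sub_left, inner_sub_right,
      real_inner_smul_left, real_inner_smul_right, hT.apply_clm]
  refine norm_le_of_abs_inner_le hS (by nlinarith) fun x => ?_
  have hform : ⟪(1 - g • T) x, x⟫ = ‖x‖ ^ 2 - g * ⟪T x, x⟫ := by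
    rw [sub_apply, smul_apply, one_apply_eq_self, inner_sub_left, real_inner_smul_left,
      real_inner_self_eq_norm_sq]
  rw [hform, abs_le]
  have hlow' := mul_le_mul_of_nonneg_left (hlow x) hg
  have hup' := mul_le_mul_of_nonneg_left (hup x) hg
  have hgC' := mul_le_mul_of_nonneg_right hgC (sq_nonneg ‖x‖)
  constructor <;> linarith

end Contraction

theorem norm_prodIcc_le_prod {E : Type*} [NormedAddCommGroup E] [NormedSpace ℝ E]
    (T : E →L[ℝ] E) (γ : ℕ → ℝ) (a b : ℕ) :
    ‖prodIcc T γ a b‖ ≤ ∏ k ∈ Icc a b, ‖1 - γ k • T‖ := by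
  have h1 : ‖(1 : E →L[ℝ] E)‖ ≤ 1 := ContinuousLinearMap.norm_id_le
  induction b with
  | zero =>
    rcases eq_or_ne a 0 with rfl | ha
    · simp [prodIcc]
    · simpa [prodIcc, ha, Icc_eq_empty, Nat.pos_of_ne_zero ha] using h1
  | succ b ih =>
    by_cases hab : a ≤ b + 1
    · rw [prodIcc, if_pos hab, prod_Icc_succ_top hab, mul_comm (∏ k ∈ Icc a b, _)]
      exact (norm_mul_le _ _).trans (mul_le_mul_of_nonneg_left ih (norm_nonneg _))
    · simpa [prodIcc, hab, Icc_eq_empty] using h1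

theorem Finset.prod_le_exp_mul_sub_sum {s : Finset ℕ} {x g : ℕ → ℝ} {N : ℕ} {c : ℝ} (hc : 0 ≤ c)
    (hx0 : ∀ k ∈ s, 0 ≤ x k) (hx : ∀ k ∈ s, x k ≤ Real.exp (c - g k))
    (hxN : ∀ k ∈ s, N ≤ k → x k ≤ Real.exp (-g k)) :
    ∏ k ∈ s, x k ≤ Real.exp (N * c - ∑ k ∈ s, g k) := by
  have hfew : ∑ k ∈ s, (if k < N then c else 0) ≤ N * c :=
    calc ∑ k ∈ s, (if k < N then c else 0) = ∑ k ∈ s.filter (· < N), c := (sum_filter _ _).symm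
      _ ≤ ∑ k ∈ range N, c := sum_le_sum_of_subset_of_nonneg
          (fun k hk => mem_range.2 (mem_filter.1 hk).2) fun _ _ _ => hc
      _ = N * c := by rw [sum_const, card_range, nsmul_eq_mul]
  calc ∏ k ∈ s, x k ≤ ∏ k ∈ s, Real.exp ((if k < N then c else 0) - g k) :=
        prod_le_prod hx0 fun k hk => by
          split_ifs with h
          · exact hx k hk
          · simpa using hxN k hk (not_lt.1 h)
    _ = Real.exp (∑ k ∈ s, (if k < N then c else 0) - ∑ k ∈ s, g k) := by
        rw [← Real.exp_sum, sum_sub_distrib]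
    _ ≤ Real.exp (N * c - ∑ k ∈ s, g k) := Real.exp_le_exp.2 (by linarith)

theorem norm_prodIcc_le_exp {E : Type*} [NormedAddCommGroup E] [InnerProductSpace ℝ E]
    {T : E →L[ℝ] E} (hT : T.IsSymmetric) {lam C B : ℝ} {γ : ℕ → ℝ} {N : ℕ} (hlam : 0 ≤ lam)
    (hlamC : lam ≤ C) (hlow : ∀ x : E, lam * ‖x‖ ^ 2 ≤ ⟪T x, x⟫)
    (hup : ∀ x : E, ⟪T x, x⟫ ≤ C * ‖x‖ ^ 2) (hγ0 : ∀ k, 0 ≤ γ k) (hγB : ∀ k, 1 ≤ k → γ k ≤ B)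
    (hγC : ∀ k, N ≤ k → γ k * C ≤ 1) {a : ℕ} (ha : 1 ≤ a) (b : ℕ) :
    ‖prodIcc T γ a b‖ ≤ Real.exp (N * (B * (‖T‖ + lam)) - lam * ∑ k ∈ Icc a b, γ k) := by
  have hB : 0 ≤ B := (hγ0 a).trans (hγB a ha)
  rw [mul_sum]
  refine (norm_prodIcc_le_prod T γ a b).trans <|
    prod_le_exp_mul_sub_sum (by positivity) (fun _ _ => norm_nonneg _) (fun k hk => ?_)
      fun k _ hk => ?_
  · have hγk := hγB k (ha.trans (mem_Icc.1 hk).1)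
    calc ‖1 - γ k • T‖ ≤ ‖(1 : E →L[ℝ] E)‖ + ‖γ k • T‖ := norm_sub_le _ _
      _ ≤ γ k * ‖T‖ + 1 := by
          rw [norm_smul, Real.norm_of_nonneg (hγ0 k), add_comm]
          exact add_le_add_right ContinuousLinearMap.norm_id_le _
      _ ≤ Real.exp (γ k * ‖T‖) := Real.add_one_le_exp _
      _ ≤ Real.exp (B * (‖T‖ + lam) - lam * γ k) :=
          Real.exp_le_exp.2 (by nlinarith [norm_nonneg T])
  · calc ‖1 - γ k • T‖ ≤ 1 - γ k * lam :=
          ContinuousLinearMap.norm_one_sub_smul_le hT hlamC hlow hup (hγ0 k) (hγC k hk)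
      _ ≤ Real.exp (-(lam * γ k)) := by linarith [Real.add_one_le_exp (-(lam * γ k))]

theorem stmt_18_general {E : Type*} [NormedAddCommGroup E] [InnerProductSpace ℝ E]
    (T : E →L[ℝ] E) (hsa : ∀ x y : E, ⟪T x, y⟫ = ⟪x, T y⟫)
    (lam C : ℝ) (hlam : 0 < lam) (hlamC : lam ≤ C)
    (hlow : ∀ x : E, lam * ‖x‖ ^ 2 ≤ ⟪T x, x⟫)
    (hup : ∀ x : E, ⟪T x, x⟫ ≤ C * ‖x‖ ^ 2)
    (α cγ : ℝ) (hα : 1 / 2 < α ∧ α < 1) (hcγ : 0 < cγ)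
    (γ : ℕ → ℝ) (hγ : ∀ k : ℕ, γ k = cγ * (k : ℝ) ^ (-α)) :
    ∃ c₀ c₁ : ℝ, 0 < c₀ ∧ 0 < c₁ ∧
      (∀ n : ℕ, 1 ≤ n →
        ‖prodIcc T γ 1 (n - 1)‖ ≤ c₀ * Real.exp (-lam * ∑ k ∈ Finset.Icc 1 n, γ k)) ∧
      (∀ n k : ℕ, 1 ≤ k → k ≤ n - 1 →
        ‖prodIcc T γ (k + 1) (n - 1)‖ ≤ c₁ * Real.exp (-lam * ∑ j ∈ Finset.Icc k n, γ j)) := by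
  have hα0 : 0 < α := by linarith [hα.1]
  have hγ0 (k : ℕ) : 0 ≤ γ k := by rw [hγ]; positivity
  have hγB (k : ℕ) (hk : 1 ≤ k) : γ k ≤ cγ := by
    rw [hγ]
    exact mul_le_of_le_one_right hcγ.le
      (Real.rpow_le_one_of_one_le_of_nonpos (by exact_mod_cast hk) (by linarith))
  have hγ_lim : Tendsto (fun k : ℕ => γ k * C) atTop (𝓝 0) := by
    simpa [hγ] using
      (((tendsto_rpow_neg_atTop hα0).comp tendsto_natCast_atTop_atTop).const_mul cγ).mul_const C
  obtain ⟨N, hN⟩ := eventually_atTop.1 (hγ_lim.eventually_lt_const one_pos)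
  have key {a : ℕ} (ha : 1 ≤ a) (b : ℕ) :=
    norm_prodIcc_le_exp hsa hlam.le hlamC hlow hup hγ0 hγB (fun k hk => (hN k hk).le) ha b
  set c := (N : ℝ) * (cγ * (‖T‖ + lam))
  refine ⟨Real.exp (c + lam * cγ), Real.exp (c + 2 * (lam * cγ)), Real.exp_pos _,
    Real.exp_pos _, fun n hn => ?_, fun n k hk hkn => ?_⟩
  all_goals
    obtain ⟨m, rfl⟩ : ∃ m, n = m + 1 := ⟨n - 1, by omega⟩
    rw [Nat.add_sub_cancel, ← Real.exp_add]
    refine (key (by omega) m).trans (Real.exp_le_exp.2 ?_)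
    rw [sum_Icc_succ_top (by omega)]
    have hγn := hγB (m + 1) (by omega)
  · nlinarith
  · rw [Icc_eq_cons_Ioc (by omega : k ≤ m), sum_cons, ← Icc_add_one_left_eq_Ioc]
    nlinarith [hγB k hk]

/-- Exponential decay of products `∏ (Id − γ_k T)` for a self-adjoint operator `T` whose
quadratic form is pinched between `λ‖x‖²` and `C‖x‖²` with `0 < λ ≤ C`, and steps
`γ_k = c_γ k^{−α}`, `α ∈ (1/2, 1)`: `‖∏_{k=1}^{n−1}(Id − γ_k T)‖ ≤ c₀ exp(−λ ∑_{k=1}^n γ_k)`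
and `‖∏_{j=k+1}^{n−1}(Id − γ_j T)‖ ≤ c₁ exp(−λ ∑_{j=k}^n γ_j)` for `1 ≤ k ≤ n−1`. -/
theorem stmt_18 {E : Type*} [NormedAddCommGroup E] [InnerProductSpace ℝ E]
    [FiniteDimensional ℝ E]
    (T : E →L[ℝ] E) (hsa : ∀ x y : E, ⟪T x, y⟫ = ⟪x, T y⟫)
    (lam C : ℝ) (hlam : 0 < lam) (hlamC : lam ≤ C)
    (hlow : ∀ x : E, lam * ‖x‖ ^ 2 ≤ ⟪T x, x⟫)
    (hup : ∀ x : E, ⟪T x, x⟫ ≤ C * ‖x‖ ^ 2)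
    (α cγ : ℝ) (hα : 1 / 2 < α ∧ α < 1) (hcγ : 0 < cγ)
    (γ : ℕ → ℝ) (hγ : ∀ k : ℕ, γ k = cγ * (k : ℝ) ^ (-α)) :
    ∃ c₀ c₁ : ℝ, 0 < c₀ ∧ 0 < c₁ ∧
      (∀ n : ℕ, 1 ≤ n →
        ‖prodIcc T γ 1 (n - 1)‖ ≤ c₀ * Real.exp (-lam * ∑ k ∈ Finset.Icc 1 n, γ k)) ∧
      (∀ n k : ℕ, 1 ≤ k → k ≤ n - 1 →
        ‖prodIcc T γ (k + 1) (n - 1)‖ ≤ c₁ * Real.exp (-lam * ∑ j ∈ Finset.Icc k n, γ j)) :=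
  stmt_18_general T hsa lam C hlam hlamC hlow hup α cγ hα hcγ γ hγ
end
end

section
/- Under Assumptions 1, 2 and 3(b) (with constant C), the following weighted moment bounds hold for the median covariation matrix Γ_m: for every q ∈ ℝ^d, (i) E[ ‖X − q‖ / ‖Y(q) − Γ_m‖_F ] ≤ C √‖Γ_m‖_F + √C, and (ii) E[ ‖X − q‖ / ‖Y(q) − Γ_m‖_F² ] ≤ C √‖Γ_m‖_F + C^{3/4}. -/
open MeasureTheory ProbabilityTheory Filter
open scoped ENNReal NNReal RealInnerProductSpace BigOperators

noncomputable section

variable {d : ℕ} {Ω : Type*} [MeasurableSpace Ω]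

/-!
Since `‖Y(q)‖_F = ‖X − q‖²`, the triangle inequality in `S(H)` gives
`‖X − q‖ ≤ √‖Γ‖_F + ‖Y(q) − Γ‖_F^{1/2}`. Dividing by `‖Y(q) − Γ‖_F^n` (`n = 1, 2`), the first
term contributes `√‖Γ‖_F · E[‖Y(q) − Γ‖_F^{−n}] ≤ C √‖Γ‖_F`, and the second is
`E[(‖Y(q) − Γ‖_F^{−n})^{1 − 1/(2n)}] ≤ C^{1 − 1/(2n)}` by Jensen's inequality for a concave power.
-/

namespace ENNReal

/-- Jensen's inequality for the concave map `t ↦ t ^ r`, via Hölder against the constant `1`. -/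
theorem lintegral_rpow_le_rpow_lintegral (P : Measure Ω) [IsProbabilityMeasure P]
    {f : Ω → ℝ≥0∞} (hf : AEMeasurable f P) {r : ℝ} (hr₀ : 0 < r) (hr₁ : r < 1) :
    ∫⁻ ω, f ω ^ r ∂P ≤ (∫⁻ ω, f ω ∂P) ^ r := by
  have hpq : (1 / r).HolderConjugate (1 / (1 - r)) := by
    refine ⟨by simp only [one_div, inv_inv, inv_one]; ring, by positivity, ?_⟩
    have : 0 < 1 - r := by linarith
    positivity
  simpa [← ENNReal.rpow_mul, mul_inv_cancel₀ hr₀.ne'] using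
    ENNReal.lintegral_mul_le_Lp_mul_Lq P hpq (hf.pow_const r) (aemeasurable_const (b := 1))

theorem rpow_half_mul_inv_pow_le (x : ℝ≥0∞) {n : ℕ} (hn : n ≠ 0) :
    x ^ (1 / 2 : ℝ) * (x ^ n)⁻¹ ≤ (x ^ n)⁻¹ ^ (1 - 1 / (2 * n) : ℝ) := by
  rcases eq_or_ne x 0 with rfl | h₀
  · simp [zero_pow hn]
  rcases eq_or_ne x ∞ with rfl | h_top
  · simp [hn]
  have hn' : (n : ℝ) ≠ 0 := by exact_mod_cast hn
  refine le_of_eq ?_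
  rw [← ENNReal.rpow_natCast, ← ENNReal.rpow_neg, ← ENNReal.rpow_add _ _ h₀ h_top,
    ← ENNReal.rpow_mul]
  congr 1
  field_simp
  ring

end ENNReal

theorem lintegral_div_pow_le (P : Measure Ω) [IsProbabilityMeasure P]
    {a b : Ω → ℝ≥0∞} {s c : ℝ≥0∞} {n : ℕ} (hn : n ≠ 0) (hb : AEMeasurable b P)
    (hab : ∀ ω, a ω ≤ s + b ω ^ (1 / 2 : ℝ)) (hc : ∫⁻ ω, (b ω ^ n)⁻¹ ∂P ≤ c) :
    ∫⁻ ω, a ω / b ω ^ n ∂P ≤ s * c + c ^ (1 - 1 / (2 * n) : ℝ) := by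
  set r : ℝ := 1 - 1 / (2 * n)
  have hr₀ : 0 < r := by
    have : (1 : ℝ) ≤ n := by exact_mod_cast Nat.one_le_iff_ne_zero.2 hn
    rw [sub_pos, div_lt_one (by positivity)]
    linarith
  have hr₁ : r < 1 := sub_lt_self 1 (by positivity)
  have hw : AEMeasurable (fun ω => (b ω ^ n)⁻¹) P := (hb.pow_const n).inv
  calc ∫⁻ ω, a ω / b ω ^ n ∂P
      ≤ ∫⁻ ω, s * (b ω ^ n)⁻¹ + (b ω ^ n)⁻¹ ^ r ∂P := by
        refine lintegral_mono fun ω => ?_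
        calc a ω / b ω ^ n ≤ (s + b ω ^ (1 / 2 : ℝ)) * (b ω ^ n)⁻¹ := by
              rw [div_eq_mul_inv]; gcongr; exact hab ω
          _ ≤ s * (b ω ^ n)⁻¹ + (b ω ^ n)⁻¹ ^ r := by
              rw [add_mul]; gcongr; exact ENNReal.rpow_half_mul_inv_pow_le _ hn
    _ = s * ∫⁻ ω, (b ω ^ n)⁻¹ ∂P + ∫⁻ ω, (b ω ^ n)⁻¹ ^ r ∂P := by
        rw [lintegral_add_left' (hw.const_mul s), lintegral_const_mul'' s hw]
    _ ≤ s * c + c ^ r := by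
        gcongr
        exact (ENNReal.lintegral_rpow_le_rpow_lintegral P hw hr₀ hr₁).trans
          (ENNReal.rpow_le_rpow hc hr₀.le)

theorem norm_Ymat (x h : EuclideanSpace ℝ (Fin d)) : ‖Ymat x h‖ = ‖x - h‖ ^ 2 := by
  have hsq : ‖Ymat x h‖ ^ 2 = (‖x - h‖ ^ 2) ^ 2 := by
    rw [EuclideanSpace.norm_sq_eq, EuclideanSpace.norm_sq_eq, sq (∑ _, _), Fintype.sum_mul_sum,
      ← Fintype.sum_prod_type']
    simp [Ymat, mul_pow]
  exact (pow_left_inj₀ (norm_nonneg _) (by positivity) two_ne_zero).1 hsq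

theorem continuous_Ymat_left (h : EuclideanSpace ℝ (Fin d)) : Continuous (Ymat · h) := by
  unfold Ymat
  exact (PiLp.continuous_toLp 2 _).comp (by fun_prop)

theorem enorm_sub_le_rpow_half_Ymat_sub (x h : EuclideanSpace ℝ (Fin d)) (V : Mat d) :
    ‖x - h‖ₑ ≤ ‖V‖ₑ ^ (1 / 2 : ℝ) + ‖Ymat x h - V‖ₑ ^ (1 / 2 : ℝ) := by
  have hY : ‖Ymat x h‖ₑ = ‖x - h‖ₑ ^ 2 := by
    rw [← ofReal_norm, ← ofReal_norm, norm_Ymat, ENNReal.ofReal_pow (norm_nonneg _)]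
  calc ‖x - h‖ₑ = ‖Ymat x h‖ₑ ^ (1 / 2 : ℝ) := by
        rw [hY, ← ENNReal.rpow_natCast, ← ENNReal.rpow_mul]; norm_num
    _ ≤ (‖V‖ₑ + ‖Ymat x h - V‖ₑ) ^ (1 / 2 : ℝ) := by
        gcongr
        simpa using enorm_add_le V (Ymat x h - V)
    _ ≤ ‖V‖ₑ ^ (1 / 2 : ℝ) + ‖Ymat x h - V‖ₑ ^ (1 / 2 : ℝ) :=
        ENNReal.rpow_add_le_add_rpow _ _ (by norm_num) (by norm_num)

theorem stmt_19_general
    {d : ℕ} (P : Measure Ω) [IsProbabilityMeasure P]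
    (X : Ω → EuclideanSpace ℝ (Fin d)) (hX : Measurable X)
    (Γ : Mat d)
    -- Assumption 3(b)
    (C : ℝ) (hC : 0 < C)
    (hA3 : ∀ (h : EuclideanSpace ℝ (Fin d)) (V : Mat d),
      (∫⁻ ω, (‖Ymat (X ω) h - V‖₊ : ℝ≥0∞)⁻¹ ∂P) ≤ ENNReal.ofReal C ∧
      (∫⁻ ω, ((‖Ymat (X ω) h - V‖₊ : ℝ≥0∞) ^ 2)⁻¹ ∂P) ≤ ENNReal.ofReal C)
    :
    ∀ q : EuclideanSpace ℝ (Fin d),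
      (∫⁻ ω, (‖X ω - q‖₊ : ℝ≥0∞) / (‖Ymat (X ω) q - Γ‖₊ : ℝ≥0∞) ∂P) ≤
        ENNReal.ofReal (C * Real.sqrt ‖Γ‖ + Real.sqrt C) ∧
      (∫⁻ ω, (‖X ω - q‖₊ : ℝ≥0∞) / ((‖Ymat (X ω) q - Γ‖₊ : ℝ≥0∞) ^ 2) ∂P) ≤
        ENNReal.ofReal (C * Real.sqrt ‖Γ‖ + C ^ ((3 : ℝ) / 4)) := by
  intro q
  have hb : Measurable fun ω => ‖Ymat (X ω) q - Γ‖ₑ :=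
    (((continuous_Ymat_left q).sub continuous_const).measurable.comp hX).enorm
  have bound {n : ℕ} (hn : n ≠ 0) := lintegral_div_pow_le P (c := ENNReal.ofReal C) hn
    hb.aemeasurable (fun ω => enorm_sub_le_rpow_half_Ymat_sub (X ω) q Γ)
  have hrhs (r : ℝ) :
      ‖Γ‖ₑ ^ (1 / 2 : ℝ) * ENNReal.ofReal C + ENNReal.ofReal C ^ r =
        ENNReal.ofReal (C * √‖Γ‖ + C ^ r) := by
    rw [← ofReal_norm, ENNReal.ofReal_rpow_of_nonneg (norm_nonneg _) (by norm_num),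
      ENNReal.ofReal_rpow_of_pos hC, ← ENNReal.ofReal_mul (by positivity),
      ← ENNReal.ofReal_add (by positivity) (by positivity), Real.sqrt_eq_rpow, mul_comm]
  obtain ⟨hA3₁, hA3₂⟩ := hA3 q Γ
  simp only [← enorm_eq_nnnorm] at hA3₁ hA3₂ ⊢
  constructor
  · have := bound one_ne_zero (by simpa using hA3₁)
    norm_num [hrhs, ← Real.sqrt_eq_rpow] at this
    exact this
  · have := bound two_ne_zero hA3₂
    norm_num [hrhs] at this
    exact this

/-- Weighted moment bounds around the median covariation matrix (used to bound the remainder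
terms `r_n` and `r_n'`): for every `q ∈ ℝ^d`,
`E[‖X − q‖/‖Y(q) − Γ_m‖_F] ≤ C√‖Γ_m‖_F + √C` and
`E[‖X − q‖/‖Y(q) − Γ_m‖_F²] ≤ C√‖Γ_m‖_F + C^{3/4}`. -/
theorem stmt_19
    {d : ℕ} (hd : 1 ≤ d) (P : Measure Ω) [IsProbabilityMeasure P]
    (X : Ω → EuclideanSpace ℝ (Fin d)) (hX : Measurable X)
    -- `m` is the geometric median of `X`: the unique minimizer of `u ↦ E[‖X − u‖ − ‖X‖]`
    (m : EuclideanSpace ℝ (Fin d))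
    (hm : ∀ u, (∫ ω, (‖X ω - m‖ - ‖X ω‖) ∂P) ≤ ∫ ω, (‖X ω - u‖ - ‖X ω‖) ∂P)
    (hm_unique : ∀ u, (∀ v, (∫ ω, (‖X ω - u‖ - ‖X ω‖) ∂P) ≤
      ∫ ω, (‖X ω - v‖ - ‖X ω‖) ∂P) → u = m)
    -- `Γ` is the median covariation matrix: the unique minimizer of `G_m`
    (Γ : Mat d)
    (hΓ : ∀ V, Gfun P X m Γ ≤ Gfun P X m V)
    (hΓ_unique : ∀ V, (∀ W, Gfun P X m V ≤ Gfun P X m W) → V = Γ)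
    -- Assumption 1
    (hA1 : ∃ u₁ u₂ : EuclideanSpace ℝ (Fin d), ‖u₁‖ = 1 ∧ ‖u₂‖ = 1 ∧
      LinearIndependent ℝ ![u₁, u₂] ∧
      0 < evariance (fun ω => ⟪u₁, X ω⟫) P ∧ 0 < evariance (fun ω => ⟪u₂, X ω⟫) P)
    -- Assumption 2
    (hA2 : ∃ V₁ V₂ : Mat d, ‖V₁‖ = 1 ∧ ‖V₂‖ = 1 ∧ LinearIndependent ℝ ![V₁, V₂] ∧
      0 < evariance (fun ω => ⟪V₁, Ymat (X ω) m⟫) P ∧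
      0 < evariance (fun ω => ⟪V₂, Ymat (X ω) m⟫) P)
    -- Assumption 3(b)
    (C : ℝ) (hC : 0 < C)
    (hA3 : ∀ (h : EuclideanSpace ℝ (Fin d)) (V : Mat d),
      (∫⁻ ω, (‖Ymat (X ω) h - V‖₊ : ℝ≥0∞)⁻¹ ∂P) ≤ ENNReal.ofReal C ∧
      (∫⁻ ω, ((‖Ymat (X ω) h - V‖₊ : ℝ≥0∞) ^ 2)⁻¹ ∂P) ≤ ENNReal.ofReal C)
    :
    ∀ q : EuclideanSpace ℝ (Fin d),
      (∫⁻ ω, (‖X ω - q‖₊ : ℝ≥0∞) / (‖Ymat (X ω) q - Γ‖₊ : ℝ≥0∞) ∂P) ≤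
        ENNReal.ofReal (C * Real.sqrt ‖Γ‖ + Real.sqrt C) ∧
      (∫⁻ ω, (‖X ω - q‖₊ : ℝ≥0∞) / ((‖Ymat (X ω) q - Γ‖₊ : ℝ≥0∞) ^ 2) ∂P) ≤
        ENNReal.ofReal (C * Real.sqrt ‖Γ‖ + C ^ ((3 : ℝ) / 4)) :=
  stmt_19_general P X hX Γ C hC hA3
end
end
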